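/- arXiv:0810.4993 — 3 statements merged into one kernel-verified Lean document; each statement's English description precedes it below -/
import Mathlib

section
/- Let A and B be parity check matrices of q-ary Hamming codes of lengths n_a = (q^{m_a}-1)/(q-1) ≥ 3 and n_b = (q^{m_b}-1)/(q-1) ≥ 3. Then the distance from any vector v ∈ F_q^{n_a n_b} to the code C with parity check matrix A ⊗ B equals the rank of the syndrome matrix B V Aᵀ, where V is the n_b × n_a matrix representation of v. -/
/-!
Reading an error `e = vec E` as an `n_b × n_a` matrix, its syndrome is `B E Aᵀ`, whose rank is at
most the number of nonzero entries of `E`; this gives the lower bound. Conversely, write a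
syndrome `S` of rank `r` as a sum of `r` outer products `x yᵀ`. A Hamming code has covering
radius one, so `x = B e` and `y = A f` with `e`, `f` of weight at most one; then
`E = ∑ e fᵀ` has weight at most `r` and syndrome `S`.
-/

open Matrix Kronecker

/-- `H` is a parity check matrix of a `q`-ary Hamming code: its columns are,
up to nonzero scalars, exactly all the nonzero vectors of `F_q^m`, each once. -/
def IsHammingPCM {F : Type*} [Field F] {m n : ℕ} (H : Matrix (Fin m) (Fin n) F) : Prop :=
  ∀ v : Fin m → F, v ≠ 0 → ∃! j : Fin n, ∃ c : F, c ≠ 0 ∧ (fun i => H i j) = c • v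

section HammingNorm

variable {ι M : Type*} [Fintype ι] [AddCommMonoid M] [DecidableEq M]

theorem hammingNorm_add_le (x y : ι → M) :
    hammingNorm (x + y) ≤ hammingNorm x + hammingNorm y := by
  classical
  refine (Finset.card_le_card fun i hi => ?_).trans (Finset.card_union_le _ _)
  simp only [Finset.mem_union, Finset.mem_filter, Finset.mem_univ, true_and] at hi ⊢
  by_contra! h
  simp [h.1, h.2] at hi

theorem hammingNorm_sum_le {κ : Type*} (s : Finset κ) (x : κ → ι → M) :
    hammingNorm (∑ k ∈ s, x k) ≤ ∑ k ∈ s, hammingNorm (x k) :=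
  Finset.le_sum_of_subadditive _ hammingNorm_zero.le hammingNorm_add_le s x

end HammingNorm

theorem hammingNorm_single_le {ι M : Type*} [Fintype ι] [DecidableEq ι] [Zero M] [DecidableEq M]
    (j : ι) (a : M) : hammingNorm (Pi.single j a : ι → M) ≤ 1 := by
  refine (Finset.card_le_card fun i hi => ?_).trans (Finset.card_singleton j).le
  by_contra h
  simp_all [Pi.single_apply]

theorem IsHammingPCM.exists_hammingNorm_le_one_mulVec_eq {F : Type*} [Field F] [DecidableEq F]
    {m n : ℕ} {H : Matrix (Fin m) (Fin n) F} (hH : IsHammingPCM H) (x : Fin m → F) :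
    ∃ e : Fin n → F, hammingNorm e ≤ 1 ∧ H *ᵥ e = x := by
  rcases eq_or_ne x 0 with rfl | hx
  · exact ⟨0, by simp, mulVec_zero H⟩
  obtain ⟨j, ⟨c, hc, hcol⟩, -⟩ := hH x hx
  refine ⟨Pi.single j c⁻¹, hammingNorm_single_le j _, funext fun i => ?_⟩
  have hij : H i j = c * x i := congrFun hcol i
  simp [mulVec_single, hij, mul_right_comm c (x i), hc]

namespace Matrix

theorem hammingNorm_vec_vecMulVec_le {m n R : Type*} [Fintype m] [Fintype n] [MulZeroClass R]
    [DecidableEq R] (x : m → R) (y : n → R) :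
    hammingNorm (vec (vecMulVec x y)) ≤ hammingNorm y * hammingNorm x := by
  refine (Finset.card_le_card fun p hp => ?_).trans (Finset.card_product _ _).le
  simp only [Finset.mem_filter, Finset.mem_univ, true_and, Finset.mem_product] at hp ⊢
  exact ⟨right_ne_zero_of_mul hp, left_ne_zero_of_mul hp⟩

theorem rank_le_hammingNorm_vec {m n R : Type*} [Fintype m] [Fintype n] [CommSemiring R]
    [StrongRankCondition R] [DecidableEq R] (M : Matrix m n R) :
    M.rank ≤ hammingNorm (vec M) := by
  classical
  refine (M.rank_le_card_of_support_subset ((Finset.univ.filter fun p => vec M p ≠ 0).image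
    Prod.snd) fun i hi => ?_).trans Finset.card_image_le
  obtain ⟨j, hj⟩ := Function.ne_iff.1 hi
  exact Finset.mem_image.2 ⟨(j, i), Finset.mem_filter.2 ⟨Finset.mem_univ _, hj⟩, rfl⟩

theorem exists_eq_sum_vecMulVec {m n F : Type*} [Fintype m] [Fintype n] [Field F]
    (S : Matrix m n F) :
    ∃ (x : Fin S.rank → m → F) (y : Fin S.rank → n → F), S = ∑ k, vecMulVec (x k) (y k) := by
  set W := Submodule.span F (Set.range S.col)
  let b : Module.Basis (Fin S.rank) F W :=
    Module.finBasisOfFinrankEq F W (S.rank_eq_finrank_span_cols).symm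
  have hcol : ∀ j, S.col j ∈ W := fun j => Submodule.subset_span ⟨j, rfl⟩
  refine ⟨fun k => b k, fun k j => b.repr ⟨S.col j, hcol j⟩ k, ?_⟩
  ext i j
  have hexpand := congrArg (fun z : W => (z : m → F) i) (b.sum_repr ⟨S.col j, hcol j⟩)
  simp only [Submodule.coe_sum, Submodule.coe_smul, Finset.sum_apply, Pi.smul_apply,
    smul_eq_mul, col_apply] at hexpand
  simp only [sum_apply, vecMulVec_apply, ← hexpand, mul_comm]

theorem rank_syndrome_le_hammingDist {R : Type*} [CommRing R] [StrongRankCondition R]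
    [DecidableEq R] {ma na mb nb : Type*} [Fintype ma] [Fintype na] [Fintype nb]
    (A : Matrix ma na R) (B : Matrix mb nb R) {V C : Matrix nb na R} (hC : B * C * Aᵀ = 0) :
    (B * V * Aᵀ).rank ≤ hammingDist (vec V) (vec C) := by
  have hsyn : B * V * Aᵀ = B * (V - C) * Aᵀ := by rw [Matrix.mul_sub, Matrix.sub_mul, hC, sub_zero]
  rw [hammingDist_comm, hammingDist_eq_hammingNorm, neg_add_eq_sub, ← vec_sub, hsyn]
  exact (rank_mul_le_left _ _).trans <| (rank_mul_le_right _ _).trans (rank_le_hammingNorm_vec _)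

theorem exists_syndrome_eq_hammingNorm_vec_le_rank {F : Type*} [Field F] [DecidableEq F]
    {ma na mb nb : Type*} [Fintype ma] [Fintype na] [Fintype mb] [Fintype nb]
    (A : Matrix ma na F) (B : Matrix mb nb F)
    (hA : ∀ y, ∃ f, hammingNorm f ≤ 1 ∧ A *ᵥ f = y)
    (hB : ∀ x, ∃ e, hammingNorm e ≤ 1 ∧ B *ᵥ e = x) (S : Matrix mb ma F) :
    ∃ E : Matrix nb na F, B * E * Aᵀ = S ∧ hammingNorm (vec E) ≤ S.rank := by
  obtain ⟨x, y, hS⟩ := S.exists_eq_sum_vecMulVec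
  choose e he hBe using fun k => hB (x k)
  choose f hf hAf using fun k => hA (y k)
  refine ⟨∑ k, vecMulVec (e k) (f k), ?_, ?_⟩
  · simp only [Matrix.mul_sum, Matrix.sum_mul, hS, ← hBe, ← hAf, mul_vecMulVec, vecMulVec_mul,
      vecMul_transpose]
  · calc hammingNorm (vec (∑ k, vecMulVec (e k) (f k)))
        ≤ ∑ k, hammingNorm (f k) * hammingNorm (e k) := by
          rw [vec_sum]
          exact (hammingNorm_sum_le _ _).trans
            (Finset.sum_le_sum fun k _ => hammingNorm_vec_vecMulVec_le _ _)
      _ ≤ ∑ _k : Fin S.rank, 1 := Finset.sum_le_sum fun k _ => Left.mul_le_one (hf k) (he k)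
      _ = S.rank := by simp

end Matrix

theorem kronecker_stmt_4_general {F : Type*} [Field F] [DecidableEq F]
    {ma na mb nb : ℕ}
    (A : Matrix (Fin ma) (Fin na) F) (B : Matrix (Fin mb) (Fin nb) F)
    (hA : IsHammingPCM A) (hB : IsHammingPCM B)
    (v : Fin na × Fin nb → F) :
    sInf {d : ℕ | ∃ c : Fin na × Fin nb → F,
        (A ⊗ₖ B).mulVec c = 0 ∧ hammingDist v c = d} =
      (B * (Matrix.of fun (i : Fin nb) (j : Fin na) => v (j, i)) * Aᵀ).rank := by
  set V : Matrix (Fin nb) (Fin na) F := Matrix.of fun i j => v (j, i)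
  have hv : v = vec V := rfl
  apply le_antisymm
  · obtain ⟨E, hE, hwt⟩ := exists_syndrome_eq_hammingNorm_vec_le_rank A B
      hA.exists_hammingNorm_le_one_mulVec_eq hB.exists_hammingNorm_le_one_mulVec_eq (B * V * Aᵀ)
    have hcode : (A ⊗ₖ B) *ᵥ vec (V - E) = 0 := by
      rw [kronecker_mulVec_vec, Matrix.mul_sub, Matrix.sub_mul, hE, sub_self, vec_zero]
    have hdist : hammingDist v (vec (V - E)) = hammingNorm (vec E) := by
      rw [hv, hammingDist_comm, hammingDist_eq_hammingNorm, neg_add_eq_sub, ← vec_sub,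
        sub_sub_cancel]
    refine (Nat.sInf_le ?_).trans (hdist.trans_le hwt)
    exact ⟨_, hcode, rfl⟩
  · refine le_csInf ⟨hammingDist v 0, 0, mulVec_zero _, rfl⟩ ?_
    rintro d ⟨c, hc, rfl⟩
    have hc' : c = vec (Matrix.of fun i j => c (j, i)) := rfl
    rw [hc', kronecker_mulVec_vec, vec_eq_zero_iff] at hc
    rw [hv, hc']
    exact rank_syndrome_le_hammingDist A B hc

/-- The distance from any vector `v ∈ F_q^{n_a n_b}` to the code `C` with
parity check matrix `A ⊗ B` (where `A`, `B` are Hamming parity check matrices)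
equals the rank of the syndrome matrix `B V Aᵀ`, where `V` is the `n_b × n_a`
matrix representation of `v`. -/
theorem kronecker_stmt_4 {F : Type*} [Field F] [Fintype F] [DecidableEq F]
    {ma na mb nb : ℕ} (hna3 : 3 ≤ na) (hnb3 : 3 ≤ nb)
    (hna : na * (Fintype.card F - 1) = Fintype.card F ^ ma - 1)
    (hnb : nb * (Fintype.card F - 1) = Fintype.card F ^ mb - 1)
    (A : Matrix (Fin ma) (Fin na) F) (B : Matrix (Fin mb) (Fin nb) F)
    (hA : IsHammingPCM A) (hB : IsHammingPCM B)
    (v : Fin na × Fin nb → F) :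
    sInf {d : ℕ | ∃ c : Fin na × Fin nb → F,
        (A ⊗ₖ B).mulVec c = 0 ∧ hammingDist v c = d} =
      (B * (Matrix.of fun (i : Fin nb) (j : Fin na) => v (j, i)) * Aᵀ).rank :=
  kronecker_stmt_4_general A B hA hB v
end

section
/- Under the same Hamming-code hypotheses, the code C with parity check matrix A ⊗ B has length n_a n_b, dimension n_a n_b - m_a m_b, and minimum distance 3. -/
/-!
The columns of a Hamming parity check matrix are nonzero (the count `n (q - 1) = q ^ m - 1` leaves
no room for a zero column) and pairwise non-proportional, so its kernel has minimum weight at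
least `3`; and it is surjective, every nonzero vector being a multiple of a column. Surjectivity
passes to `A ⊗ B` through right inverses, which gives the dimension. If `x` is a weight-3 word of
`ker A`, then `x ⊗ e_j` is one of `ker (A ⊗ B)`. Conversely, read `x ∈ ker (A ⊗ B)` of weight
below `3` as a matrix `X` with `A X Bᵀ = 0`: the columns of `X Bᵀ` lie in `ker A` and have no more
nonzero entries than `X`, so they vanish; then the rows of `X` lie in `ker B` and vanish too.
-/

open Matrix Kronecker

section HammingNorm

variable {ι κ β : Type*} [Fintype ι] [Fintype κ]

theorem hammingNorm_curry_apply_le [Zero β] [DecidableEq β] (x : ι × κ → β) (i : ι) :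
    hammingNorm (Function.curry x i) ≤ hammingNorm x :=
  Finset.card_le_card_of_injOn (fun j => (i, j))
    (fun _ hj => by simpa using (Finset.mem_filter.1 hj).2) (fun _ _ _ _ h => congrArg Prod.snd h)

theorem hammingNorm_curry_le [Zero β] [DecidableEq β] [DecidableEq ι] [DecidableEq (κ → β)]
    (x : ι × κ → β) :
    hammingNorm (Function.curry x) ≤ hammingNorm x := by
  refine (Finset.card_le_card fun i hi => ?_).trans (Finset.card_image_le (f := Prod.fst))
  obtain ⟨j, hj⟩ := Function.ne_iff.1 (Finset.mem_filter.1 hi).2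
  exact Finset.mem_image.2 ⟨(i, j), by simpa using hj, rfl⟩

theorem hammingNorm_prod_mul [MulZeroClass β] [NoZeroDivisors β] [DecidableEq β]
    (x : ι → β) (y : κ → β) :
    hammingNorm (fun p : ι × κ => x p.1 * y p.2) = hammingNorm x * hammingNorm y := by
  simp only [hammingNorm, ← Finset.card_product, ← Finset.filter_product, Finset.univ_product_univ,
    ne_eq, mul_eq_zero, not_or]

theorem hammingNorm_single [Zero β] [DecidableEq β] [DecidableEq ι] {a : β} (ha : a ≠ 0) (i : ι) :
    hammingNorm (Pi.single i a : ι → β) = 1 := by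
  simp [hammingNorm, Pi.single_apply, ha, Finset.filter_eq']

end HammingNorm

namespace Matrix

variable {R : Type*} {l m n p : Type*} [Fintype n] [Fintype p]

def KerWeightAtLeast [NonUnitalNonAssocSemiring R] [DecidableEq R] (H : Matrix m n R) (d : ℕ) :
    Prop :=
  ∀ x : n → R, H *ᵥ x = 0 → x ≠ 0 → d ≤ hammingNorm x

theorem kerWeightAtLeast_of_linearIndepOn [CommRing R] [DecidableEq R] {H : Matrix m n R}
    {d : ℕ} (h : ∀ s : Finset n, s.card < d → LinearIndepOn R H.col s) :
    H.KerWeightAtLeast d := by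
  intro x hx hx0
  by_contra! hlt
  have hsum : ∑ j ∈ Finset.univ.filter (x · ≠ 0), x j • H.col j = 0 := by
    rw [Finset.sum_filter_of_ne fun j _ hj => left_ne_zero_of_smul hj, ← hx, mulVec_eq_sum]
    simp only [op_smul_eq_smul]
    rfl
  refine hx0 (funext fun j => ?_)
  by_contra hj
  exact hj (linearIndepOn_finset_iff.1 (h _ hlt) x hsum j (by simpa using hj))

theorem kronecker_mulVec_apply [CommSemiring R] (A : Matrix l n R) (B : Matrix m p R)
    (x : n × p → R) (r : l) (s : m) :
    ((A ⊗ₖ B) *ᵥ x) (r, s) = (A *ᵥ fun i => (B *ᵥ Function.curry x i) s) r := by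
  simp only [mulVec, dotProduct, kroneckerMap_apply, Fintype.sum_prod_type, Finset.mul_sum,
    Function.curry_apply, mul_assoc]

theorem kronecker_mulVec_prod_mul [CommSemiring R] (A : Matrix l n R) (B : Matrix m p R)
    (x : n → R) (y : p → R) :
    (A ⊗ₖ B) *ᵥ (fun q : n × p => x q.1 * y q.2) = fun q => (A *ᵥ x) q.1 * (B *ᵥ y) q.2 := by
  ext ⟨r, s⟩
  simp only [mulVec, dotProduct, kroneckerMap_apply, Fintype.sum_prod_type, Finset.sum_mul_sum]
  exact Finset.sum_congr rfl fun _ _ => Finset.sum_congr rfl fun _ _ => by ring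

theorem KerWeightAtLeast.kronecker [CommSemiring R] [DecidableEq R] {A : Matrix l n R}
    {B : Matrix m p R} {d : ℕ} (hA : A.KerWeightAtLeast d) (hB : B.KerWeightAtLeast d) :
    (A ⊗ₖ B).KerWeightAtLeast d := by
  classical
  intro x hx hx0
  by_contra! hlt
  have hcols : ∀ s, (fun i => (B *ᵥ Function.curry x i) s) = 0 := by
    intro s
    by_contra hne
    refine (hA _ (funext fun r => ?_) hne).not_gt ?_
    · rw [← kronecker_mulVec_apply, hx]
      rfl
    · calc hammingNorm (fun i => (B *ᵥ Function.curry x i) s)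
          ≤ hammingNorm (Function.curry x) :=
            hammingNorm_comp_le_hammingNorm (fun _ v => (B *ᵥ v) s) fun _ => by simp
        _ ≤ hammingNorm x := hammingNorm_curry_le x
        _ < d := hlt
  have hrows : ∀ i, Function.curry x i = 0 := by
    intro i
    by_contra hne
    exact (hB _ (funext fun s => congrFun (hcols s) i) hne).not_gt
      ((hammingNorm_curry_apply_le x i).trans_lt hlt)
  exact hx0 (funext fun q => congrFun (hrows q.1) q.2)

theorem finrank_ker_mulVecLin_of_surjective [Field R] [Fintype m] {H : Matrix m n R}
    (hH : Function.Surjective H.mulVec) :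
    Module.finrank R (LinearMap.ker H.mulVecLin) = Fintype.card n - Fintype.card m := by
  have hrange : LinearMap.range H.mulVecLin = ⊤ := LinearMap.range_eq_top.2 hH
  have := LinearMap.finrank_range_add_finrank_ker H.mulVecLin
  rw [hrange, finrank_top, Module.finrank_fintype_fun_eq_card, Module.finrank_fintype_fun_eq_card]
    at this
  omega

theorem mulVec_surjective_kronecker [CommSemiring R] [Fintype l] [Fintype m] [DecidableEq l]
    [DecidableEq m] {A : Matrix l n R} {B : Matrix m p R} (hA : Function.Surjective A.mulVec)
    (hB : Function.Surjective B.mulVec) : Function.Surjective (A ⊗ₖ B).mulVec := by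
  obtain ⟨A', hA'⟩ := mulVec_surjective_iff_exists_right_inverse.1 hA
  obtain ⟨B', hB'⟩ := mulVec_surjective_iff_exists_right_inverse.1 hB
  exact mulVec_surjective_iff_exists_right_inverse.2
    ⟨A' ⊗ₖ B', by rw [← mul_kronecker_mul, hA', hB', one_kronecker_one]⟩

end Matrix

namespace IsHammingPCM

variable {F : Type*} [Field F] {m n : ℕ} {H : Matrix (Fin m) (Fin n) F}

theorem mulVec_surjective (hH : IsHammingPCM H) : Function.Surjective H.mulVec := by
  intro u
  rcases eq_or_ne u 0 with rfl | hu
  · exact ⟨0, mulVec_zero H⟩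
  obtain ⟨j, ⟨c, hc, hcol⟩, -⟩ := hH u hu
  refine ⟨Pi.single j c⁻¹, ?_⟩
  rw [mulVec_single, op_smul_eq_smul, show H.col j = c • u from hcol, smul_smul,
    inv_mul_cancel₀ hc, one_smul]

variable [Fintype F]

theorem col_ne_zero (hH : IsHammingPCM H)
    (hn : n * (Fintype.card F - 1) = Fintype.card F ^ m - 1) (j : Fin n) : H.col j ≠ 0 := by
  classical
  choose col c hc using fun v : {v : Fin m → F // v ≠ 0} => (hH v v.2).exists
  let e : {v : Fin m → F // v ≠ 0} → Fin n × Fˣ := fun v => (col v, Units.mk0 (c v) (hc v).1)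
  have he : e.Bijective := by
    refine (Fintype.bijective_iff_injective_and_card e).2 ⟨fun v w hvw => ?_, ?_⟩
    · simp only [e, Prod.mk.injEq, Units.mk0_inj] at hvw
      have hvw' := (hc v).2
      rw [hvw.1, (hc w).2, hvw.2] at hvw'
      exact Subtype.ext (smul_right_injective _ (hc w).1 hvw').symm
    · rw [Fintype.card_prod, Fintype.card_units, Fintype.card_fin, hn, Fintype.card_subtype_compl,
        Fintype.card_subtype_eq, Fintype.card_fun, Fintype.card_fin]
  obtain ⟨v, hv⟩ := he.2 (j, 1)
  simp only [e, Prod.mk.injEq, Units.ext_iff, Units.val_mk0, Units.val_one] at hv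
  have hcol := (hc v).2
  rw [hv.1, hv.2, one_smul] at hcol
  exact hcol.trans_ne v.2

theorem smul_col_ne (hH : IsHammingPCM H)
    (hn : n * (Fintype.card F - 1) = Fintype.card F ^ m - 1) {i j : Fin n} (hij : i ≠ j) (a : F) :
    a • H.col i ≠ H.col j := by
  intro h
  have ha : a ≠ 0 := by
    rintro rfl
    exact hH.col_ne_zero hn j (by simp [← h])
  obtain ⟨k, -, huniq⟩ := hH (H.col i) (hH.col_ne_zero hn i)
  exact hij ((huniq i ⟨1, one_ne_zero, (one_smul F _).symm⟩).trans
    (huniq j ⟨a, ha, h.symm⟩).symm)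

theorem kerWeightAtLeast_three [DecidableEq F] (hH : IsHammingPCM H)
    (hn : n * (Fintype.card F - 1) = Fintype.card F ^ m - 1) : H.KerWeightAtLeast 3 := by
  refine kerWeightAtLeast_of_linearIndepOn fun s hs => ?_
  rcases (by omega : s.card = 0 ∨ s.card = 1 ∨ s.card = 2) with h | h | h
  · simp [Finset.card_eq_zero.1 h]
  · obtain ⟨j, rfl⟩ := Finset.card_eq_one.1 h
    simpa using hH.col_ne_zero hn j
  · obtain ⟨i, j, hij, rfl⟩ := Finset.card_eq_two.1 h
    rw [Finset.coe_pair, linearIndepOn_pair_iff _ hij (hH.col_ne_zero hn i)]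
    exact hH.smul_col_ne hn hij

theorem exists_mulVec_eq_zero_hammingNorm_eq_three [DecidableEq F] (hH : IsHammingPCM H)
    (hn : n * (Fintype.card F - 1) = Fintype.card F ^ m - 1) (hn1 : 1 < n) :
    ∃ x : Fin n → F, H *ᵥ x = 0 ∧ hammingNorm x = 3 := by
  let i₁ : Fin n := ⟨0, by omega⟩
  let i₂ : Fin n := ⟨1, hn1⟩
  have h12 : i₁ ≠ i₂ := by simp [i₁, i₂, Fin.ext_iff]
  have hsum : H.col i₁ + H.col i₂ ≠ 0 := fun h =>
    hH.smul_col_ne hn h12 (-1) (by rw [neg_one_smul]; exact neg_eq_of_add_eq_zero_right h)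
  obtain ⟨i₃, ⟨c, hc, hcol⟩, -⟩ := hH _ hsum
  let x : Fin n → F := Pi.single i₁ c + Pi.single i₂ c - Pi.single i₃ 1
  have hx : H *ᵥ x = 0 := by
    simp only [x, mulVec_sub, mulVec_add, mulVec_single, op_smul_eq_smul, one_smul]
    rw [show H.col i₃ = c • (H.col i₁ + H.col i₂) from hcol, smul_add, sub_self]
  have hx0 : x ≠ 0 := by
    intro h
    by_cases h31 : i₃ = i₁
    · simpa [x, h31, h12, Pi.single_apply, hc] using congrFun h i₂
    · simpa [x, Ne.symm h31, h12, Pi.single_apply, hc] using congrFun h i₁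
  -- `i₃` may a priori coincide with `i₁` or `i₂`: the weight is pinned to `3` by
  -- `kerWeightAtLeast_three` rather than by distinctness.
  refine ⟨x, hx, le_antisymm ?_ (hH.kerWeightAtLeast_three hn x hx hx0)⟩
  calc hammingNorm x ≤ ({i₁, i₂, i₃} : Finset (Fin n)).card :=
        Finset.card_le_card fun i hi => by
          by_contra hi'
          simp only [Finset.mem_insert, Finset.mem_singleton, not_or] at hi'
          simp [x, Pi.single_apply, hi'] at hi
    _ ≤ 3 := Finset.card_le_three

end IsHammingPCM

/-- The code `C = ker(A ⊗ B)`, with `A`, `B` Hamming parity check matrices, has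
length `n_a n_b`, dimension `n_a n_b - m_a m_b` and minimum distance `3`. -/
theorem kronecker_stmt_6 {F : Type*} [Field F] [Fintype F] [DecidableEq F]
    {ma na mb nb : ℕ} (hna3 : 3 ≤ na) (hnb3 : 3 ≤ nb)
    (hna : na * (Fintype.card F - 1) = Fintype.card F ^ ma - 1)
    (hnb : nb * (Fintype.card F - 1) = Fintype.card F ^ mb - 1)
    (A : Matrix (Fin ma) (Fin na) F) (B : Matrix (Fin mb) (Fin nb) F)
    (hA : IsHammingPCM A) (hB : IsHammingPCM B) :
    Fintype.card (Fin na × Fin nb) = na * nb ∧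
    Module.finrank F (LinearMap.ker (A ⊗ₖ B).mulVecLin) = na * nb - ma * mb ∧
    IsLeast {w : ℕ | ∃ x : Fin na × Fin nb → F,
      (A ⊗ₖ B).mulVec x = 0 ∧ x ≠ 0 ∧ hammingNorm x = w} 3 := by
  refine ⟨by simp, ?_, ?_, ?_⟩
  · rw [finrank_ker_mulVecLin_of_surjective
      (mulVec_surjective_kronecker hA.mulVec_surjective hB.mulVec_surjective)]
    simp
  · obtain ⟨x, hx, hx3⟩ := hA.exists_mulVec_eq_zero_hammingNorm_eq_three hna (by omega)
    let y : Fin nb → F := Pi.single ⟨0, by omega⟩ 1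
    have hxy : hammingNorm (fun q : Fin na × Fin nb => x q.1 * y q.2) = 3 := by
      rw [hammingNorm_prod_mul, hx3, hammingNorm_single one_ne_zero, mul_one]
    refine ⟨_, ?_, hammingNorm_pos_iff.1 (by omega), hxy⟩
    rw [kronecker_mulVec_prod_mul, hx]
    exact funext fun _ => zero_mul _
  · rintro w ⟨x, hx, hx0, rfl⟩
    exact (hA.kerWeightAtLeast_three hna).kronecker (hB.kerWeightAtLeast_three hnb) x hx hx0
end

section
/- Let C be the binary code of length 28 with parity check matrix A ⊗ B, where A = [I_3 | 1] is the parity check matrix of the binary repetition code of length 4 and B is the parity check matrix of the [7,4,3] binary Hamming code. Then C is not completely regular: the vectors x₁ with ones in positions 1 and 8 and x₂ with ones in positions 1 and 9 both lie at distance 2 from C, but x₁ has exactly 4 neighbors at distance 1 from C while x₂ has exactly 2. -/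
/-!
Over `𝔽₂`, a vector `v` lies within distance one of `ker H` exactly when its syndrome `H v` is
zero or a column of `H`, and the neighbours of `x` are the vectors `x + eₚ`, with syndromes
`H x + H.col p`. Hence both distances and both neighbour counts are finite computations with the
28 columns of `A ⊗ B` in `𝔽₂⁹`.
-/

open Matrix Kronecker Finset

section Hamming

variable {ι : Type*} [Fintype ι] [DecidableEq ι]

theorem hammingNorm_eq_one_iff {β : Type*} [Zero β] [DecidableEq β] {u : ι → β} :
    hammingNorm u = 1 ↔ ∃ p, ∃ a ≠ 0, u = Pi.single p a := by
  constructor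
  · intro h
    obtain ⟨p, hp⟩ := card_eq_one.mp h
    have hsupp (i : ι) : u i ≠ 0 ↔ i = p := by simpa using Finset.ext_iff.mp hp i
    refine ⟨p, u p, (hsupp p).2 rfl, funext fun i => ?_⟩
    by_cases hi : i = p
    · subst hi; simp
    · simpa [hi] using (hsupp i).not.2 hi
  · rintro ⟨p, a, ha, rfl⟩
    refine card_eq_one.mpr ⟨p, Finset.ext fun i => ?_⟩
    by_cases hi : i = p <;> simp [hi, ha]

theorem ZMod.ne_zero_iff_eq_one {a : ZMod 2} : a ≠ 0 ↔ a = 1 := by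
  revert a; decide

theorem hammingDist_eq_one_iff_exists_add_single {v w : ι → ZMod 2} :
    hammingDist v w = 1 ↔ ∃ p, w = v + Pi.single p 1 := by
  simp only [hammingDist_eq_hammingNorm, hammingNorm_eq_one_iff, ZMod.ne_zero_iff_eq_one,
    exists_eq_left, neg_add_eq_iff_eq_add]

theorem ncard_setOf_hammingDist_eq_one_and (x : ι → ZMod 2) (Q : (ι → ZMod 2) → Prop) :
    {y | hammingDist x y = 1 ∧ Q y}.ncard = {p | Q (x + Pi.single p 1)}.ncard := by
  have hsingle : Function.Injective fun p : ι => (Pi.single p 1 : ι → ZMod 2) := fun p q h => by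
    by_contra hpq
    simpa [Pi.single_eq_of_ne hpq] using congrFun h p
  have himage : {y | hammingDist x y = 1 ∧ Q y} =
      (fun p => x + Pi.single p 1) '' {p | Q (x + Pi.single p 1)} := by
    ext y
    simp only [Set.mem_ofPred_eq, hammingDist_eq_one_iff_exists_add_single, Set.mem_image]
    constructor
    · rintro ⟨⟨p, rfl⟩, hQ⟩; exact ⟨p, hQ, rfl⟩
    · rintro ⟨p, hQ, rfl⟩; exact ⟨⟨p, rfl⟩, hQ⟩
  have hinj : Function.Injective fun p => x + Pi.single p 1 := (add_right_injective x).comp hsingle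
  rw [himage, Set.ncard_image_of_injective _ hinj]

end Hamming

section CodeDist

variable {ι κ R : Type*} [Fintype ι] [Semiring R] [DecidableEq R]

noncomputable def codeDist (H : Matrix κ ι R) (v : ι → R) : ℕ :=
  sInf {d | ∃ c, H *ᵥ c = 0 ∧ hammingDist v c = d}

variable {H : Matrix κ ι R} {v c : ι → R}

theorem codeDist_le_hammingDist (hc : H *ᵥ c = 0) : codeDist H v ≤ hammingDist v c :=
  Nat.sInf_le ⟨c, hc, rfl⟩

theorem codeDist_le_iff {n : ℕ} : codeDist H v ≤ n ↔ ∃ c, H *ᵥ c = 0 ∧ hammingDist v c ≤ n := by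
  refine ⟨fun h => ?_, fun ⟨c, hc, hn⟩ => (codeDist_le_hammingDist hc).trans hn⟩
  obtain ⟨c, hc, hvc⟩ := Nat.sInf_mem (⟨_, 0, H.mulVec_zero, rfl⟩ :
    {d | ∃ c, H *ᵥ c = 0 ∧ hammingDist v c = d}.Nonempty)
  exact ⟨c, hc, hvc.trans_le h⟩

theorem codeDist_eq_zero_iff : codeDist H v = 0 ↔ H *ᵥ v = 0 := by
  rw [← Nat.le_zero, codeDist_le_iff]
  simp only [Nat.le_zero, hammingDist_eq_zero]
  exact ⟨fun ⟨c, hc, hvc⟩ => hvc ▸ hc, fun h => ⟨v, h, rfl⟩⟩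

end CodeDist

section BinaryCodeDist

variable {ι κ : Type*} [Fintype ι] [DecidableEq ι] {H : Matrix κ ι (ZMod 2)} {v : ι → ZMod 2}

theorem mulVec_add_single_eq_zero_iff {p : ι} :
    H *ᵥ (v + Pi.single p 1) = 0 ↔ H *ᵥ v = H.col p := by
  rw [mulVec_add, mulVec_single_one, add_eq_zero_iff_eq_neg,
    show -H.col p = H.col p from funext fun k => ZMod.neg_eq_self_mod_two _]

theorem codeDist_le_one_iff : codeDist H v ≤ 1 ↔ H *ᵥ v = 0 ∨ ∃ p, H *ᵥ v = H.col p := by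
  rw [codeDist_le_iff]
  constructor
  · rintro ⟨c, hc, hvc⟩
    rcases Nat.le_one_iff_eq_zero_or_eq_one.mp hvc with hvc | hvc
    · exact .inl (hammingDist_eq_zero.mp hvc ▸ hc)
    · obtain ⟨p, rfl⟩ := hammingDist_eq_one_iff_exists_add_single.mp hvc
      exact .inr ⟨p, mulVec_add_single_eq_zero_iff.mp hc⟩
  · rintro (hv | ⟨p, hp⟩)
    · exact ⟨v, hv, (hammingDist_self v).trans_le zero_le_one⟩
    · exact ⟨v + Pi.single p 1, mulVec_add_single_eq_zero_iff.mpr hp,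
        (hammingDist_eq_one_iff_exists_add_single.mpr ⟨p, rfl⟩).le⟩

theorem codeDist_eq_one_iff : codeDist H v = 1 ↔ H *ᵥ v ≠ 0 ∧ ∃ p, H *ᵥ v = H.col p := by
  rw [show ∀ n : ℕ, n = 1 ↔ n ≤ 1 ∧ n ≠ 0 by omega, codeDist_le_one_iff, ne_eq,
    codeDist_eq_zero_iff]
  tauto

theorem codeDist_eq_two {c : ι → ZMod 2} (hc : H *ᵥ c = 0) (hvc : hammingDist v c = 2)
    (hv : H *ᵥ v ≠ 0) (hcol : ∀ p, H *ᵥ v ≠ H.col p) : codeDist H v = 2 := by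
  have hle : codeDist H v ≤ 2 := (codeDist_le_hammingDist hc).trans_eq hvc
  have hgt : ¬ codeDist H v ≤ 1 := by simp [codeDist_le_one_iff, hv, hcol]
  omega

theorem ncard_setOf_hammingDist_eq_one_and_codeDist_eq_one [Fintype κ] (x : ι → ZMod 2) :
    {y | hammingDist x y = 1 ∧ codeDist H y = 1}.ncard =
      #{p | H *ᵥ x + H.col p ≠ 0 ∧ ∃ q, H *ᵥ x + H.col p = H.col q} := by
  simp only [ncard_setOf_hammingDist_eq_one_and, codeDist_eq_one_iff, mulVec_add, mulVec_single_one]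
  rw [← Set.ncard_coe_finset, coe_filter]
  simp only [mem_univ, true_and]

end BinaryCodeDist

/-- The binary `[28,19,3]` code with parity check matrix `A ⊗ B`, where
`A = [I₃ | 1]` (repetition code of length 4) and `B` is the parity check
matrix of the `[7,4,3]` Hamming code, is not completely regular: the vectors
`x₁` (ones in positions 1 and 8) and `x₂` (ones in positions 1 and 9) are both
at distance 2 from `C`, but `x₁` has exactly 4 neighbors at distance 1 from
`C` whereas `x₂` has exactly 2. -/
theorem kronecker_stmt_17 :
    let A : Matrix (Fin 3) (Fin 4) (ZMod 2) := !![1,0,0,1; 0,1,0,1; 0,0,1,1]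
    let B : Matrix (Fin 3) (Fin 7) (ZMod 2) :=
      !![1,0,0,1,0,1,1; 0,1,0,1,1,0,1; 0,0,1,0,1,1,1]
    let dC : (Fin 4 × Fin 7 → ZMod 2) → ℕ := fun v =>
      sInf {d : ℕ | ∃ c : Fin 4 × Fin 7 → ZMod 2,
        (A ⊗ₖ B).mulVec c = 0 ∧ hammingDist v c = d}
    let x₁ : Fin 4 × Fin 7 → ZMod 2 := fun p =>
      if p = ((0 : Fin 4), (0 : Fin 7)) ∨ p = ((1 : Fin 4), (0 : Fin 7)) then 1 else 0
    let x₂ : Fin 4 × Fin 7 → ZMod 2 := fun p =>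
      if p = ((0 : Fin 4), (0 : Fin 7)) ∨ p = ((1 : Fin 4), (1 : Fin 7)) then 1 else 0
    dC x₁ = 2 ∧ dC x₂ = 2 ∧
      {y : Fin 4 × Fin 7 → ZMod 2 | hammingDist x₁ y = 1 ∧ dC y = 1}.ncard = 4 ∧
      {y : Fin 4 × Fin 7 → ZMod 2 | hammingDist x₂ y = 1 ∧ dC y = 1}.ncard = 2 := by
  intro A B dC x₁ x₂
  change codeDist (A ⊗ₖ B) x₁ = 2 ∧ codeDist (A ⊗ₖ B) x₂ = 2 ∧
    {y | hammingDist x₁ y = 1 ∧ codeDist (A ⊗ₖ B) y = 1}.ncard = 4 ∧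
    {y | hammingDist x₂ y = 1 ∧ codeDist (A ⊗ₖ B) y = 1}.ncard = 2
  simp only [ncard_setOf_hammingDist_eq_one_and_codeDist_eq_one]
  refine ⟨codeDist_eq_two (mulVec_zero _) ?_ ?_ ?_, codeDist_eq_two (mulVec_zero _) ?_ ?_ ?_, ?_, ?_⟩
  all_goals decide
end
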